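/- Let κ be a regular cardinal such that B and C are locally κ-presentable categories (with finite products) and such that the Day convolution of any two κ-accessible functors B ⥤ C is κ-accessible. Then the Day convolution bifunctor ∗ : Func_κ(B, C) × Func_κ(B, C) ⥤ Func_κ(B, C) is itself a κ-accessible functor, i.e. it preserves κ-filtered colimits (equivalently, pointwise in each variable separately). -/

import Mathlib

/-!
Colimits in `Func_κ(B, C)` are computed in `B ⥤ C`, since a colimit of κ-accessible functors is
κ-accessible (colimits commute with colimits). As `D P` is a pointwise left Kan extension of
`dayInput P.1 P.2` along the product, maps `D P ⟶ F` correspond naturally to maps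
`dayInput P.1 P.2 ⟶ prodUncurried B ⋙ F`, so `D` preserves every colimit that
`P ↦ dayInput P.1 P.2` preserves. The latter preserves κ-filtered colimits because binary products
in `C` commute with κ-filtered colimits: testing against the dense κ-presentable objects `s`,
`Hom(s, -)` reduces this to the commutation of filtered colimits with binary products of sets.
-/

open CategoryTheory CategoryTheory.Limits Opposite

universe w v v' v'' u u' u''

/-- A category `J` is `κ`-filtered if every diagram in `J` indexed by a category
with fewer than `κ` arrows admits a cocone. -/
def IsCardinalFilteredCat (κ : Cardinal.{w}) (J : Type u) [Category.{v} J] : Prop :=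
  ∀ (A : Type w) (_ : SmallCategory A), Cardinal.mk (Arrow A) < κ →
    ∀ F : A ⥤ J, Nonempty (Limits.Cocone F)

/-- A functor is `κ`-accessible if it preserves colimits of every small
`κ`-filtered shape. -/
def PreservesCardinalFilteredColimits (κ : Cardinal.{w})
    {B : Type u} [Category.{v} B] {C : Type u'} [Category.{v'} C] (F : B ⥤ C) : Prop :=
  ∀ (J : Type w) (_ : SmallCategory J), IsCardinalFilteredCat κ J →
    PreservesColimitsOfShape J F

/-- A functor is accessible if it preserves `κ`-filtered colimits for some
regular cardinal `κ`. -/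
def IsAccessibleFunctor {B : Type u} [Category.{v} B] {C : Type u'} [Category.{v'} C]
    (F : B ⥤ C) : Prop :=
  ∃ κ : Cardinal.{w}, κ.IsRegular ∧ PreservesCardinalFilteredColimits κ F

/-- The canonical cocone on the diagram of all objects of the full subcategory `S`
mapping to `b`, whose point is `b`. -/
def canonicalCoconeOfSub {B : Type u} [Category.{v} B] (S : Set B) (b : B) :
    Cocone (CostructuredArrow.proj (ObjectProperty.ι (· ∈ S)) b ⋙
      ObjectProperty.ι (· ∈ S)) where
  pt := b
  ι :=
    { app := fun g => g.hom
      naturality := fun g g' φ => (CostructuredArrow.w φ).trans (Category.comp_id _).symm }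

/-- A set of objects `S` is dense if every object of `B` is the colimit of the
canonical diagram over it of objects of `S`. -/
def IsDenseSub {B : Type u} [Category.{v} B] (S : Set B) : Prop :=
  ∀ b : B, Nonempty (IsColimit (canonicalCoconeOfSub S b))

/-- A category is locally `κ`-presentable if `κ` is regular, the category is
cocomplete, and it has a small dense full subcategory of `κ`-compact objects,
i.e. of objects `b` such that `Hom(b, -)` preserves `κ`-filtered colimits. -/
structure IsLocallyPresentable (κ : Cardinal.{w}) (B : Type u) [Category.{v} B] : Prop where
  isRegular : κ.IsRegular
  hasColimits : HasColimitsOfSize.{w, w} B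
  exists_dense_compacts : ∃ S : Set B, Small.{w} S ∧
    (∀ b ∈ S, PreservesCardinalFilteredColimits κ (coyoneda.obj (op b))) ∧
    IsDenseSub S

/-- The (uncurried) binary product functor of a category with binary products. -/
noncomputable def prodUncurried (B : Type u) [Category.{v} B] [HasBinaryProducts B] :
    B × B ⥤ B :=
  Functor.uncurry.obj Limits.prod.functor

/-- Given `F G : B ⥤ C`, this is the functor `B × B ⥤ C` sending `(x, y)` to
`F x ⨯ G y`; its pointwise left Kan extension along the binary product functor
of `B` is the Day convolution `F ∗ G`. -/
noncomputable def dayInput {B : Type u} [Category.{v} B] {C : Type u'} [Category.{v'} C]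
    [HasBinaryProducts C] (F G : B ⥤ C) : B × B ⥤ C :=
  F.prod G ⋙ prodUncurried C

/-- The action of the Day convolution input on pairs of natural transformations. -/
noncomputable def dayInputMap {B : Type u} [Category.{v} B] {C : Type u'} [Category.{v'} C]
    [HasBinaryProducts C] {F F' G G' : B ⥤ C} (φ : F ⟶ F') (ψ : G ⟶ G') :
    dayInput F G ⟶ dayInput F' G' :=
  Functor.whiskerRight (NatTrans.prod φ ψ) (prodUncurried C)

/-- The category `Func_κ(B, C)` of `κ`-accessible functors `B ⥤ C`. -/
def AccFunc (κ : Cardinal.{w}) (B : Type u) [Category.{v} B]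
    (C : Type u') [Category.{v'} C] :=
  ObjectProperty.FullSubcategory fun F : B ⥤ C => PreservesCardinalFilteredColimits.{w} κ F

instance (κ : Cardinal.{w}) (B : Type u) [Category.{v} B]
    (C : Type u') [Category.{v'} C] : Category (AccFunc κ B C) :=
  ObjectProperty.FullSubcategory.category _

/-- The inclusion `Func_κ(B, C) ⥤ (B ⥤ C)`. -/
def accFuncInclusion (κ : Cardinal.{w}) (B : Type u) [Category.{v} B]
    (C : Type u') [Category.{v'} C] : AccFunc κ B C ⥤ (B ⥤ C) :=
  ObjectProperty.ι _

namespace CategoryTheory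

open MonoidalCategory

theorem isFiltered_of_isCardinalFilteredCat {κ : Cardinal.{w}} (hκ : κ.IsRegular)
    {J : Type w} [SmallCategory J] (hJ : IsCardinalFilteredCat κ J) : IsFiltered J :=
  have : Fact κ.IsRegular := ⟨hκ⟩
  have : IsCardinalFiltered J κ :=
    ⟨fun F hA => hJ _ _ ((hasCardinalLT_iff_cardinal_mk_lt _ _).mp hA) F⟩
  isFiltered_of_isCardinalFiltered J κ

section ProdCategory

variable {J : Type*} [Category J] {A : Type*} [Category A] {B' : Type*} [Category B']

def Limits.Cocone.replaceFst {K : J ⥤ A × B'} (c : Cocone K) (s : Cocone (K ⋙ Prod.fst A B')) :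
    Cocone K where
  pt := (s.pt, c.pt.2)
  ι :=
    { app j := (s.ι.app j, (c.ι.app j).2)
      naturality j j' f := by
        ext
        · exact s.ι.naturality f
        · exact congrArg (fun g => g.2) (c.ι.naturality f) }

noncomputable def isColimitMapCoconeFst {K : J ⥤ A × B'} {c : Cocone K} (hc : IsColimit c) :
    IsColimit ((Prod.fst A B').mapCocone c) where
  desc s := (hc.desc (c.replaceFst s)).1
  fac s j := congrArg (fun g => g.1) (hc.fac (c.replaceFst s) j)
  uniq s m hm := congrArg (fun g => g.1) (hc.uniq (c.replaceFst s) (m, 𝟙 _) fun j => by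
    ext
    · exact hm j
    · exact Category.comp_id _)

noncomputable def isColimitMapCoconeSnd {K : J ⥤ A × B'} {c : Cocone K} (hc : IsColimit c) :
    IsColimit ((Prod.snd A B').mapCocone c) :=
  isColimitMapCoconeFst (isColimitOfPreserves (Prod.swap A B') hc)

noncomputable def isColimitOfIsColimitMapCoconeFstSnd {K : J ⥤ A × B'} {c : Cocone K}
    (h₁ : IsColimit ((Prod.fst A B').mapCocone c))
    (h₂ : IsColimit ((Prod.snd A B').mapCocone c)) :
    IsColimit c where
  desc s := (h₁.desc ((Prod.fst A B').mapCocone s), h₂.desc ((Prod.snd A B').mapCocone s))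
  fac _ j := Prod.ext (h₁.fac _ j) (h₂.fac _ j)
  uniq s m hm := Prod.ext
    (h₁.uniq ((Prod.fst A B').mapCocone s) m.1 fun j => congrArg (fun g => g.1) (hm j))
    (h₂.uniq ((Prod.snd A B').mapCocone s) m.2 fun j => congrArg (fun g => g.2) (hm j))

variable {A' : Type*} [Category A'] {B'' : Type*} [Category B'']

instance (F : A ⥤ A') (G : B' ⥤ B'') [PreservesColimitsOfShape J F]
    [PreservesColimitsOfShape J G] : PreservesColimitsOfShape J (F.prod G) where
  preservesColimit := ⟨fun hc => ⟨isColimitOfIsColimitMapCoconeFstSnd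
    (isColimitOfPreserves F (isColimitMapCoconeFst hc))
    (isColimitOfPreserves G (isColimitMapCoconeSnd hc))⟩⟩

instance [IsSifted J] : PreservesColimitsOfShape J (tensor (Type u)) where
  preservesColimit :=
    ⟨fun hc => ⟨IsColimit.tensor (isColimitMapCoconeFst hc) (isColimitMapCoconeSnd hc)⟩⟩

end ProdCategory

section Dense

variable {C : Type u'} [Category.{v'} C]

theorem isDense_ι_of_isDenseSub {S : Set C} (hS : IsDenseSub S) :
    (ObjectProperty.ι (· ∈ S)).IsDense where
  isDenseAt Y := ⟨(hS Y).some.ofIsoColimit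
    (Cocone.ext (Iso.refl _) fun _ => (Category.comp_id _).trans (Category.id_comp _).symm)⟩

noncomputable def coyonedaJointlyReflectsColimitsOfIsDenseSub {S : Set C} (hS : IsDenseSub S)
    {J : Type*} [Category J] {R : J ⥤ C} {t : Cocone R}
    (h : ∀ s ∈ S, IsColimit ((coyoneda.obj (op s)).mapCocone t)) :
    IsColimit t :=
  have := isDense_ι_of_isDenseSub hS
  isColimitOfReflects (Presheaf.restrictedULiftYoneda.{0} (ObjectProperty.ι (· ∈ S)))
    (evaluationJointlyReflectsColimits _ fun s =>
      isColimitOfPreserves uliftFunctor.{0, v'} (h s.unop.obj s.unop.property))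

end Dense

section BinaryProducts

variable {C : Type u'} [Category.{v'} C] [HasBinaryProducts C]

lemma prodUncurried_obj (X : C × C) : (prodUncurried C).obj X = (X.1 ⨯ X.2) := rfl

lemma prodUncurried_map {X Y : C × C} (f : X ⟶ Y) :
    (prodUncurried C).map f = prod.map f.1 f.2 := by
  change prod.map f.1 (𝟙 X.2) ≫ prod.map (𝟙 Y.1) f.2 = _
  rw [prod.map_map, Category.comp_id, Category.id_comp]

noncomputable def prodHomEquiv (s a b : C) : (s ⟶ a ⨯ b) ≃ (s ⟶ a) × (s ⟶ b) where
  toFun f := (f ≫ prod.fst, f ≫ prod.snd)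
  invFun p := prod.lift p.1 p.2
  left_inv f := by ext <;> simp [prod.lift_fst, prod.lift_snd]
  right_inv p := by simp [prod.lift_fst, prod.lift_snd]

noncomputable def prodUncurriedCompCoyonedaIso (s : C) :
    prodUncurried C ⋙ coyoneda.obj (op s) ≅
      (coyoneda.obj (op s)).prod (coyoneda.obj (op s)) ⋙ tensor (Type v') :=
  NatIso.ofComponents (fun X => (prodHomEquiv s X.1 X.2).toIso) fun {X Y} f => by
    ext (g : s ⟶ X.1 ⨯ X.2)
    change ((g ≫ (prodUncurried C).map f) ≫ prod.fst, (g ≫ (prodUncurried C).map f) ≫ _) =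
      ((g ≫ prod.fst) ≫ f.1, (g ≫ prod.snd) ≫ f.2)
    rw [prodUncurried_map]
    -- exposes `Y.1 ⨯ Y.2` as the middle object, so that `prod.map_fst` applies
    dsimp only [prodUncurried_obj]
    simp [prod.map_fst, prod.map_snd]

theorem preservesColimitsOfShape_prodUncurried {J : Type*} [Category J] [IsFiltered J]
    {S : Set C} (hS : IsDenseSub S)
    (hcompact : ∀ s ∈ S, PreservesColimitsOfShape J (coyoneda.obj (op s))) :
    PreservesColimitsOfShape J (prodUncurried C) where
  preservesColimit := ⟨fun hc => ⟨coyonedaJointlyReflectsColimitsOfIsDenseSub hS fun s hs =>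
    have := hcompact s hs
    have : IsSifted J := IsFiltered.isSifted
    have : PreservesColimitsOfShape J (prodUncurried C ⋙ coyoneda.obj (op s)) :=
      preservesColimitsOfShape_of_natIso (prodUncurriedCompCoyonedaIso s).symm
    isColimitOfPreserves (prodUncurried C ⋙ coyoneda.obj (op s)) hc⟩⟩

end BinaryProducts

section Accessible

variable {B : Type u} [Category.{v} B] {C : Type u'} [Category.{v'} C]

theorem preservesColimitsOfShape_pt_of_isColimit {J : Type*} [Category J] {K : Type*}
    [Category K] [HasColimitsOfShape J C] {E : J ⥤ B ⥤ C}
    [∀ j, PreservesColimitsOfShape K (E.obj j)]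
    {c : Cocone E} (hc : IsColimit c) : PreservesColimitsOfShape K c.pt :=
  have : PreservesColimitsOfShape K E.flip := preservesColimitsOfShape_of_evaluation _ _ fun j =>
    preservesColimitsOfShape_of_natIso (flipCompEvaluation E j).symm
  preservesColimitsOfShape_of_natIso
    ((colimitIsoFlipCompColim E).symm ≪≫ (colimit.isColimit E).coconePointUniqueUpToIso hc)

instance (κ : Cardinal.{w}) (J : Type*) [Category J] [HasColimitsOfShape J C] :
    ObjectProperty.IsClosedUnderColimitsOfShape
      (fun F : B ⥤ C => PreservesCardinalFilteredColimits.{w} κ F) J where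
  colimitsOfShape_le := by
    rintro G ⟨h⟩ K _ hK
    have := fun j => h.prop_diag_obj j K _ hK
    exact preservesColimitsOfShape_pt_of_isColimit h.isColimit

instance (κ : Cardinal.{w}) : (accFuncInclusion κ B C).Full :=
  inferInstanceAs (ObjectProperty.ι _).Full

instance (κ : Cardinal.{w}) : (accFuncInclusion κ B C).Faithful :=
  inferInstanceAs (ObjectProperty.ι _).Faithful

instance (κ : Cardinal.{w}) (J : Type*) [Category J] [HasColimitsOfShape J C] :
    PreservesColimitsOfShape J (accFuncInclusion κ B C) :=
  inferInstanceAs (PreservesColimitsOfShape J (ObjectProperty.ι _))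

end Accessible

section Universal

variable {X : Type*} [Category X] {A : Type*} [Category A] {B : Type*} [Category B]

theorem preservesColimitsOfShape_of_isUniversal (Φ : X ⥤ A) (Ψ : X ⥤ B) (R : B ⥤ A)
    (α : Φ ⟶ Ψ ⋙ R)
    (hα : ∀ x y, Function.Bijective fun f : Ψ.obj x ⟶ y => α.app x ≫ R.map f)
    (J : Type*) [Category J] [PreservesColimitsOfShape J Φ] : PreservesColimitsOfShape J Ψ where
  preservesColimit {K} := ⟨fun {c} hc => by
    have hΦ := isColimitOfPreserves Φ hc
    have comm (s : Cocone (K ⋙ Ψ)) (f : Ψ.obj c.pt ⟶ s.pt) (j : J) :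
        Φ.map (c.ι.app j) ≫ α.app c.pt ≫ R.map f =
          α.app (K.obj j) ≫ R.map (Ψ.map (c.ι.app j) ≫ f) := by
      rw [R.map_comp, ← Category.assoc, ← Category.assoc]
      exact congrArg (· ≫ R.map f) (α.naturality (c.ι.app j))
    let t (s : Cocone (K ⋙ Ψ)) :=
      (Cocone.precompose (Functor.whiskerLeft K α)).obj (R.mapCocone s)
    let desc (s : Cocone (K ⋙ Ψ)) := (Equiv.ofBijective _ (hα c.pt s.pt)).symm (hΦ.desc (t s))
    have hdesc (s : Cocone (K ⋙ Ψ)) : α.app c.pt ≫ R.map (desc s) = hΦ.desc (t s) :=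
      (Equiv.ofBijective _ (hα c.pt s.pt)).apply_symm_apply _
    refine ⟨{ desc := desc, fac := fun s j => (hα _ _).1 ?_, uniq := fun s m hm => ?_ }⟩
    · change α.app _ ≫ R.map (Ψ.map (c.ι.app j) ≫ desc s) = α.app _ ≫ R.map (s.ι.app j)
      rw [← comm, hdesc]
      exact hΦ.fac (t s) j
    · apply (hα _ _).1
      change α.app c.pt ≫ R.map m = α.app c.pt ≫ R.map (desc s)
      rw [hdesc]
      refine hΦ.uniq (t s) _ fun j => ?_
      change Φ.map (c.ι.app j) ≫ α.app c.pt ≫ R.map m =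
        α.app (K.obj j) ≫ R.map (s.ι.app j)
      rw [comm]
      exact congrArg (α.app (K.obj j) ≫ R.map ·) (hm j)⟩

end Universal

section DayConvolution

variable {B : Type u} [Category.{v} B] {C : Type u'} [Category.{v'} C] [HasBinaryProducts C]

noncomputable def dayInputFunctor : (B ⥤ C) × (B ⥤ C) ⥤ (B × B ⥤ C) :=
  prodFunctor ⋙ (Functor.whiskeringRight _ _ _).obj (prodUncurried C)

instance {J : Type*} [Category J] [HasColimitsOfShape J C]
    [PreservesColimitsOfShape J (prodUncurried C)] :
    PreservesColimitsOfShape J (dayInputFunctor (B := B) (C := C)) :=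
  preservesColimitsOfShape_of_evaluation _ _ fun z =>
    inferInstanceAs (PreservesColimitsOfShape J
      (((evaluation B C).obj z.1).prod ((evaluation B C).obj z.2) ⋙ prodUncurried C))

end DayConvolution

end CategoryTheory

theorem day_bifunctor_accessible_general
    (κ : Cardinal.{w}) (hκ : κ.IsRegular)
    (B : Type u) [Category.{v} B] (C : Type u') [Category.{v'} C]
    [HasBinaryProducts B] [HasBinaryProducts C]
    (hC : IsLocallyPresentable.{w} κ C)
    (D : AccFunc.{w} κ B C × AccFunc.{w} κ B C ⥤ AccFunc.{w} κ B C)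
    (α : ∀ P : AccFunc.{w} κ B C × AccFunc.{w} κ B C,
      dayInput ((accFuncInclusion κ B C).obj P.1) ((accFuncInclusion κ B C).obj P.2) ⟶
        prodUncurried B ⋙ (accFuncInclusion κ B C).obj (D.obj P))
    (hα : ∀ P, Nonempty
      ((CategoryTheory.Functor.LeftExtension.mk
        ((accFuncInclusion κ B C).obj (D.obj P)) (α P)).IsPointwiseLeftKanExtension))
    (hnat : ∀ (P Q : AccFunc.{w} κ B C × AccFunc.{w} κ B C)
        (η₁ : P.1 ⟶ Q.1) (η₂ : P.2 ⟶ Q.2),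
      dayInputMap ((accFuncInclusion κ B C).map η₁) ((accFuncInclusion κ B C).map η₂) ≫ α Q =
        α P ≫ Functor.whiskerLeft (prodUncurried B)
          ((accFuncInclusion κ B C).map (D.map ((η₁, η₂) : P ⟶ Q)))) :
    PreservesCardinalFilteredColimits.{w} κ D := by
  intro J _ hJ
  have : IsFiltered J := isFiltered_of_isCardinalFilteredCat hκ hJ
  have := hC.hasColimits
  obtain ⟨S, -, hScompact, hSdense⟩ := hC.exists_dense_compacts
  have := preservesColimitsOfShape_prodUncurried hSdense fun s hs => hScompact s hs J _ hJ
  have hbij (P : AccFunc κ B C × AccFunc κ B C) (F : B ⥤ C) :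
      Function.Bijective fun f : (accFuncInclusion κ B C).obj (D.obj P) ⟶ F =>
        α P ≫ Functor.whiskerLeft (prodUncurried B) f :=
    have : ((accFuncInclusion κ B C).obj (D.obj P)).IsLeftKanExtension (α P) :=
      (hα P).some.isLeftKanExtension
    (Functor.homEquivOfIsLeftKanExtension _ (α P) F).bijective
  have : PreservesColimitsOfShape J (D ⋙ accFuncInclusion κ B C) :=
    preservesColimitsOfShape_of_isUniversal
      ((accFuncInclusion κ B C).prod (accFuncInclusion κ B C) ⋙ dayInputFunctor)
      (D ⋙ accFuncInclusion κ B C) ((Functor.whiskeringLeft _ _ _).obj (prodUncurried B))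
      { app := α, naturality := fun P Q η => hnat P Q η.1 η.2 } hbij J
  exact preservesColimitsOfShape_of_reflects_of_preserves D (accFuncInclusion κ B C)

/-- STATEMENT 19: let `κ` be a regular cardinal such that `B` and `C` are
locally `κ`-presentable (with finite products) and such that the Day
convolution of any two `κ`-accessible functors is again `κ`-accessible.  Then
the Day convolution bifunctor `∗ : Func_κ(B, C) × Func_κ(B, C) ⥤ Func_κ(B, C)`
(a functor `D` whose values carry pointwise left Kan extension structures `α`,
naturally in both variables) is itself `κ`-accessible, i.e. it preserves
`κ`-filtered colimits. -/
theorem day_bifunctor_accessible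
    (κ : Cardinal.{w}) (hκ : κ.IsRegular)
    (B : Type u) [Category.{v} B] (C : Type u') [Category.{v'} C]
    [HasBinaryProducts B] [HasBinaryProducts C]
    (hB : IsLocallyPresentable.{w} κ B) (hC : IsLocallyPresentable.{w} κ C)
    (D : AccFunc.{w} κ B C × AccFunc.{w} κ B C ⥤ AccFunc.{w} κ B C)
    (α : ∀ P : AccFunc.{w} κ B C × AccFunc.{w} κ B C,
      dayInput ((accFuncInclusion κ B C).obj P.1) ((accFuncInclusion κ B C).obj P.2) ⟶
        prodUncurried B ⋙ (accFuncInclusion κ B C).obj (D.obj P))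
    (hα : ∀ P, Nonempty
      ((CategoryTheory.Functor.LeftExtension.mk
        ((accFuncInclusion κ B C).obj (D.obj P)) (α P)).IsPointwiseLeftKanExtension))
    (hnat : ∀ (P Q : AccFunc.{w} κ B C × AccFunc.{w} κ B C)
        (η₁ : P.1 ⟶ Q.1) (η₂ : P.2 ⟶ Q.2),
      dayInputMap ((accFuncInclusion κ B C).map η₁) ((accFuncInclusion κ B C).map η₂) ≫ α Q =
        α P ≫ Functor.whiskerLeft (prodUncurried B)
          ((accFuncInclusion κ B C).map (D.map ((η₁, η₂) : P ⟶ Q)))) :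
    PreservesCardinalFilteredColimits.{w} κ D :=
  day_bifunctor_accessible_general κ hκ B C hC D α hα hnat
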